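/- Ladyzhenskaya's inequality on the 2D torus: there is a constant C > 0 such that for all u ∈ W^{1,2}(𝕋²), ‖u‖_{L⁴(𝕋²)}² ≤ C ‖u‖_{L²(𝕋²)} ‖u‖_{W^{1,2}(𝕋²)}. -/

import Mathlib

open MeasureTheory

noncomputable section

/-- Vectors/points in the plane (the torus is modelled by periodic functions). -/
abbrev V := ℝ × ℝ

/-- Euclidean dot product on `ℝ²`. -/
def dot (a b : V) : ℝ := a.1 * b.1 + a.2 * b.2

/-- Fundamental domain `[0,1]²` of the torus `𝕋²`. -/
def Tbox : Set V := Set.Icc 0 1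

/-- `u` is `ℤ²`-periodic, i.e. a function on the torus `𝕋²`. -/
def Per2 (u : V → V) : Prop :=
  (∀ x : V, u (x + (1, 0)) = u x) ∧ ∀ x : V, u (x + (0, 1)) = u x

/-- A scalar function on the torus. -/
def SPer2 (f : V → ℝ) : Prop :=
  (∀ x : V, f (x + (1, 0)) = f x) ∧ ∀ x : V, f (x + (0, 1)) = f x

/-- Directional derivative of a vector field in direction `e`. -/
def pd (u : V → V) (e : V) (x : V) : V := fderiv ℝ u x e

/-- Directional derivative of a scalar field. -/
def spd (f : V → ℝ) (e : V) (x : V) : ℝ := fderiv ℝ f x e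

/-- Second directional derivative of a vector field. -/
def pd2 (u : V → V) (e f : V) (x : V) : V := fderiv ℝ (fun y => pd u e y) x f

/-- Second directional derivative of a scalar field. -/
def spd2 (f : V → ℝ) (e e' : V) (x : V) : ℝ := fderiv ℝ (fun y => spd f e y) x e'

/-- Divergence of a vector field. -/
def divg (u : V → V) (x : V) : ℝ := (pd u (1, 0) x).1 + (pd u (0, 1) x).2

/-- Pointwise squared Frobenius norm of the gradient `∇u`. -/
def gradsq (u : V → V) (x : V) : ℝ :=
  dot (pd u (1, 0) x) (pd u (1, 0) x) + dot (pd u (0, 1) x) (pd u (0, 1) x)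

/-- Pointwise squared Frobenius norm of the Hessian `∇²u`. -/
def hesssq (u : V → V) (x : V) : ℝ :=
  dot (pd2 u (1, 0) (1, 0) x) (pd2 u (1, 0) (1, 0) x)
  + dot (pd2 u (1, 0) (0, 1) x) (pd2 u (1, 0) (0, 1) x)
  + dot (pd2 u (0, 1) (1, 0) x) (pd2 u (0, 1) (1, 0) x)
  + dot (pd2 u (0, 1) (0, 1) x) (pd2 u (0, 1) (0, 1) x)

/-- Squared `L²(𝕋²)` norm of a vector field. -/
def L2sq (u : V → V) : ℝ := ∫ x in Tbox, dot (u x) (u x)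

/-- Squared `L²(𝕋²)` norm of the gradient. -/
def GradL2sq (u : V → V) : ℝ := ∫ x in Tbox, gradsq u x

/-- Squared `L²(𝕋²)` norm of the Hessian. -/
def HessL2sq (u : V → V) : ℝ := ∫ x in Tbox, hesssq u x


section LadyzhenskayaAux

open Set intervalIntegral

lemma lady_ii_eq (h : ℝ → ℝ) : ∫ t in (0:ℝ)..1, h t = ∫ t in Icc (0:ℝ) 1, h t := by
  rw [intervalIntegral.integral_of_le zero_le_one, integral_Icc_eq_integral_Ioc]

lemma lady_contP {h : ℝ×ℝ → ℝ} (hh : Continuous h) :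
    Continuous fun y => ∫ t in (0:ℝ)..1, h (t,y) :=
  intervalIntegral.continuous_parametric_intervalIntegral_of_continuous'
    (f := fun y t => h (t,y)) (hh.comp continuous_swap) 0 1

lemma lady_contQ {h : ℝ×ℝ → ℝ} (hh : Continuous h) :
    Continuous fun x => ∫ s in (0:ℝ)..1, h (x,s) :=
  intervalIntegral.continuous_parametric_intervalIntegral_of_continuous'
    (f := fun x s => h (x,s)) hh 0 1

lemma lady_box_eq : Set.Icc (0:ℝ×ℝ) 1 = (Icc (0:ℝ) 1) ×ˢ (Icc (0:ℝ) 1) := Icc_prod_eq _ _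

lemma lady_restrict_box : (volume : Measure (ℝ×ℝ)).restrict (Set.Icc 0 1)
    = ((volume : Measure ℝ).restrict (Icc 0 1)).prod ((volume : Measure ℝ).restrict (Icc 0 1)) := by
  rw [lady_box_eq, Measure.volume_eq_prod, ← Measure.prod_restrict]

lemma lady_mem_box {p : ℝ×ℝ} (hp : p ∈ Set.Icc (0:ℝ×ℝ) 1) :
    p.1 ∈ Icc (0:ℝ) 1 ∧ p.2 ∈ Icc (0:ℝ) 1 := by
  rw [lady_box_eq] at hp; exact ⟨hp.1, hp.2⟩

lemma lady_oned {f : ℝ → ℝ} (hf : ContDiff ℝ 1 f) {x : ℝ}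
    (hx : x ∈ Set.Icc (0:ℝ) 1) :
    f x ≤ (∫ t in (0:ℝ)..1, f t) + ∫ t in (0:ℝ)..1, |deriv f t| := by
  obtain ⟨z, hz, hmin⟩ := isCompact_Icc.exists_isMinOn (Set.nonempty_Icc.2 zero_le_one)
    (hf.continuous.continuousOn (s := Set.Icc (0:ℝ) 1))
  have hderiv_cont : Continuous (deriv f) := hf.continuous_deriv le_rfl
  have hfz : f z ≤ ∫ t in (0:ℝ)..1, f t := by
    have h1 : ∫ t in (0:ℝ)..1, f z ≤ ∫ t in (0:ℝ)..1, f t := by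
      apply intervalIntegral.integral_mono_on zero_le_one (intervalIntegrable_const)
        (hf.continuous.intervalIntegrable _ _)
      intro t ht; exact hmin ht
    simpa using h1
  have hftc : f x - f z = ∫ t in z..x, deriv f t := by
    rw [intervalIntegral.integral_deriv_eq_sub
      (fun t _ => (hf.differentiable one_ne_zero).differentiableAt)
      (hderiv_cont.intervalIntegrable _ _)]
  have habs : ∫ t in z..x, deriv f t ≤ ∫ t in (0:ℝ)..1, |deriv f t| := by
    calc ∫ t in z..x, deriv f t ≤ |∫ t in z..x, deriv f t| := le_abs_self _
    _ ≤ |∫ t in z..x, (|deriv f t|)| := by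
        simpa using intervalIntegral.norm_integral_le_abs_integral_norm
          (f := deriv f) (a := z) (b := x)
    _ ≤ ∫ t in (0:ℝ)..1, |deriv f t| := by
        rcases le_total z x with h | h
        · rw [abs_of_nonneg (intervalIntegral.integral_nonneg h (fun t _ => abs_nonneg _))]
          exact intervalIntegral.integral_mono_interval hz.1 h hx.2
            (Filter.Eventually.of_forall fun t => abs_nonneg _)
            ((hderiv_cont.abs.intervalIntegrable _ _))
        · rw [intervalIntegral.integral_symm, abs_neg,
            abs_of_nonneg (intervalIntegral.integral_nonneg h (fun t _ => abs_nonneg _))]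
          exact intervalIntegral.integral_mono_interval hx.1 h hz.2
            (Filter.Eventually.of_forall fun t => abs_nonneg _)
            ((hderiv_cont.abs.intervalIntegrable _ _))
  linarith

lemma lady_hd1 {g : ℝ×ℝ → ℝ} (hg : ContDiff ℝ (⊤ : ℕ∞) g) (y t : ℝ) :
    HasDerivAt (fun t => g (t,y)) (fderiv ℝ g (t,y) (1,0)) t :=
  ((hg.differentiable (by simp)) (t,y)).hasFDerivAt.comp_hasDerivAt t
    (HasDerivAt.prodMk (hasDerivAt_id t) (hasDerivAt_const t y))

lemma lady_hd2 {g : ℝ×ℝ → ℝ} (hg : ContDiff ℝ (⊤ : ℕ∞) g) (x s : ℝ) :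
    HasDerivAt (fun s => g (x,s)) (fderiv ℝ g (x,s) (0,1)) s :=
  ((hg.differentiable (by simp)) (x,s)).hasFDerivAt.comp_hasDerivAt s
    (HasDerivAt.prodMk (hasDerivAt_const s x) (hasDerivAt_id s))

lemma lady_cont_fd {g : ℝ×ℝ → ℝ} (hg : ContDiff ℝ (⊤ : ℕ∞) g) (e : ℝ×ℝ) :
    Continuous fun p => fderiv ℝ g p e :=
  (hg.continuous_fderiv (by simp)).clm_apply continuous_const

lemma lady_twod {g : ℝ×ℝ → ℝ} (hg : ContDiff ℝ (⊤ : ℕ∞) g) (h0 : ∀ p, 0 ≤ g p) :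
    ∫ p in Set.Icc (0:ℝ×ℝ) 1, (g p)^2 ≤
      ((∫ p in Set.Icc (0:ℝ×ℝ) 1, g p) + ∫ p in Set.Icc (0:ℝ×ℝ) 1, |fderiv ℝ g p (0,1)|) *
      ((∫ p in Set.Icc (0:ℝ×ℝ) 1, g p) + ∫ p in Set.Icc (0:ℝ×ℝ) 1, |fderiv ℝ g p (1,0)|) := by
  have hcg : Continuous g := hg.continuous
  have hc1 : Continuous fun p : ℝ×ℝ => |fderiv ℝ g p (1,0)| := (lady_cont_fd hg _).abs
  have hc2 : Continuous fun p : ℝ×ℝ => |fderiv ℝ g p (0,1)| := (lady_cont_fd hg _).abs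
  set F : ℝ → ℝ := fun y => (∫ t in (0:ℝ)..1, g (t,y)) + ∫ t in (0:ℝ)..1, |fderiv ℝ g (t,y) (1,0)|
    with hF
  set G : ℝ → ℝ := fun x => (∫ s in (0:ℝ)..1, g (x,s)) + ∫ s in (0:ℝ)..1, |fderiv ℝ g (x,s) (0,1)|
    with hG
  have hFc : Continuous F := (lady_contP hcg).add (lady_contP hc1)
  have hGc : Continuous G := (lady_contQ hcg).add (lady_contQ hc2)
  have hgF : ∀ p ∈ Set.Icc (0:ℝ×ℝ) 1, g p ≤ F p.2 := by
    intro p hp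
    have hder : deriv (fun t => g (t, p.2)) = fun t => fderiv ℝ g (t, p.2) (1,0) :=
      funext fun t => (lady_hd1 hg p.2 t).deriv
    have hcd : ContDiff ℝ 1 (fun t => g (t, p.2)) :=
      (hg.of_le (mod_cast le_top)).comp (contDiff_id.prodMk contDiff_const)
    have h := lady_oned hcd (lady_mem_box hp).1
    rw [hder] at h
    simpa using h
  have hgG : ∀ p ∈ Set.Icc (0:ℝ×ℝ) 1, g p ≤ G p.1 := by
    intro p hp
    have hder : deriv (fun s => g (p.1, s)) = fun s => fderiv ℝ g (p.1, s) (0,1) :=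
      funext fun s => (lady_hd2 hg p.1 s).deriv
    have hcd : ContDiff ℝ 1 (fun s => g (p.1, s)) :=
      (hg.of_le (mod_cast le_top)).comp (contDiff_const.prodMk contDiff_id)
    have h := lady_oned hcd (lady_mem_box hp).2
    rw [hder] at h
    simpa using h
  have key1 : ∫ p in Set.Icc (0:ℝ×ℝ) 1, (g p)^2 ≤ ∫ p in Set.Icc (0:ℝ×ℝ) 1, G p.1 * F p.2 := by
    apply setIntegral_mono_on
    · exact (hcg.pow 2).integrableOn_Icc
    · have : IntegrableOn (fun p : ℝ×ℝ => G p.1 * F p.2) (Set.Icc 0 1) := by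
        rw [IntegrableOn, lady_restrict_box]
        exact (hGc.integrableOn_Icc).mul_prod (hFc.integrableOn_Icc)
      exact this
    · exact measurableSet_Icc
    · intro p hp
      have h1 := hgG p hp
      have h2 := hgF p hp
      nlinarith [h0 p, mul_le_mul h1 h2 (h0 p) (le_trans (h0 p) h1)]
  have key2 : ∫ p in Set.Icc (0:ℝ×ℝ) 1, G p.1 * F p.2
      = (∫ x in Icc (0:ℝ) 1, G x) * (∫ y in Icc (0:ℝ) 1, F y) := by
    rw [lady_restrict_box]
    exact integral_prod_mul G F
  have hint : ∀ h : ℝ×ℝ → ℝ, Continuous h → Integrable h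
      (((volume : Measure ℝ).restrict (Icc 0 1)).prod
        ((volume : Measure ℝ).restrict (Icc 0 1))) := by
    intro h hh
    rw [← lady_restrict_box]
    exact hh.integrableOn_Icc
  have key3 : ∫ x in Icc (0:ℝ) 1, G x
      = (∫ p in Set.Icc (0:ℝ×ℝ) 1, g p) + ∫ p in Set.Icc (0:ℝ×ℝ) 1, |fderiv ℝ g p (0,1)| := by
    rw [hG, integral_add ((lady_contQ hcg).integrableOn_Icc) ((lady_contQ hc2).integrableOn_Icc)]
    congr 1
    · simp_rw [lady_ii_eq]
      rw [lady_restrict_box, integral_prod _ (hint g hcg)]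
    · simp_rw [lady_ii_eq]
      rw [lady_restrict_box, integral_prod _ (hint _ hc2)]
  have key4 : ∫ y in Icc (0:ℝ) 1, F y
      = (∫ p in Set.Icc (0:ℝ×ℝ) 1, g p) + ∫ p in Set.Icc (0:ℝ×ℝ) 1, |fderiv ℝ g p (1,0)| := by
    rw [hF, integral_add ((lady_contP hcg).integrableOn_Icc) ((lady_contP hc1).integrableOn_Icc)]
    congr 1
    · simp_rw [lady_ii_eq]
      rw [lady_restrict_box, integral_prod_symm _ (hint g hcg)]
    · simp_rw [lady_ii_eq]
      rw [lady_restrict_box, integral_prod_symm _ (hint _ hc1)]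
  rw [← key3, ← key4, ← key2]
  exact key1

lemma lady_dot_nonneg (a : V) : 0 ≤ dot a a := by
  unfold dot; nlinarith [sq_nonneg a.1, sq_nonneg a.2]

lemma lady_dot_cs (a b : V) : |dot a b| ≤ Real.sqrt (dot a a) * Real.sqrt (dot b b) := by
  have h1 : dot a b ^ 2 ≤ (dot a a) * (dot b b) := by
    unfold dot; nlinarith [sq_nonneg (a.1*b.2 - a.2*b.1)]
  calc |dot a b| = Real.sqrt ((dot a b)^2) := (Real.sqrt_sq_eq_abs _).symm
  _ ≤ Real.sqrt ((dot a a)*(dot b b)) := Real.sqrt_le_sqrt h1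
  _ = _ := Real.sqrt_mul (lady_dot_nonneg a) _

lemma lady_fderiv_dot {u : V → V} (hu : ContDiff ℝ (⊤ : ℕ∞) u) (x e : V) :
    fderiv ℝ (fun x => dot (u x) (u x)) x e = 2 * dot (u x) (fderiv ℝ u x e) := by
  have hdu := ((hu.differentiable (by simp)) x).hasFDerivAt
  have h1 : HasFDerivAt (fun x => (u x).1)
      ((ContinuousLinearMap.fst ℝ ℝ ℝ).comp (fderiv ℝ u x)) x := (hasFDerivAt_fst).comp x hdu
  have h2 : HasFDerivAt (fun x => (u x).2)
      ((ContinuousLinearMap.snd ℝ ℝ ℝ).comp (fderiv ℝ u x)) x := (hasFDerivAt_snd).comp x hdu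
  have hg : HasFDerivAt (fun x => dot (u x) (u x))
      (((u x).1 • ((ContinuousLinearMap.fst ℝ ℝ ℝ).comp (fderiv ℝ u x))
        + (u x).1 • ((ContinuousLinearMap.fst ℝ ℝ ℝ).comp (fderiv ℝ u x)))
        + ((u x).2 • ((ContinuousLinearMap.snd ℝ ℝ ℝ).comp (fderiv ℝ u x))
        + (u x).2 • ((ContinuousLinearMap.snd ℝ ℝ ℝ).comp (fderiv ℝ u x)))) x := by
    exact (h1.mul h1).add (h2.mul h2)
  rw [hg.fderiv]
  simp [dot]
  ring

lemma lady_contDiff_dot {u : V → V} (hu : ContDiff ℝ (⊤ : ℕ∞) u) :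
    ContDiff ℝ (⊤ : ℕ∞) (fun x => dot (u x) (u x)) := by
  unfold dot
  exact ((contDiff_fst.comp hu).mul (contDiff_fst.comp hu)).add
    ((contDiff_snd.comp hu).mul (contDiff_snd.comp hu))

lemma lady_holder_step {f h : V → ℝ} (hfc : Continuous f) (hhc : Continuous h)
    (hf0 : ∀ x, 0 ≤ f x) (hh0 : ∀ x, 0 ≤ h x) :
    ∫ x in Set.Icc (0:V) 1, Real.sqrt (f x) * Real.sqrt (h x)
      ≤ Real.sqrt (∫ x in Set.Icc (0:V) 1, f x) * Real.sqrt (∫ x in Set.Icc (0:V) 1, h x) := by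
  set μ := (volume : Measure V).restrict (Set.Icc 0 1) with hμ
  haveI : IsFiniteMeasure μ := ⟨by
    rw [hμ, Measure.restrict_apply_univ]
    exact isCompact_Icc.measure_lt_top⟩
  have hmem : ∀ (f : V → ℝ), Continuous f → MemLp f (ENNReal.ofReal 2) μ := by
    intro f hfc
    obtain ⟨C, hC⟩ := isCompact_Icc.exists_bound_of_continuousOn
      (hfc.continuousOn (s := Set.Icc (0:V) 1))
    apply MemLp.of_bound hfc.aestronglyMeasurable.restrict C
    filter_upwards [ae_restrict_mem measurableSet_Icc] with x hx
    exact hC x hx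
  have hconj : (2:ℝ).HolderConjugate 2 := ⟨by norm_num, by norm_num, by norm_num⟩
  have key := integral_mul_le_Lp_mul_Lq_of_nonneg hconj
    (f := fun x => Real.sqrt (f x)) (g := fun x => Real.sqrt (h x)) (μ := μ)
    (Filter.Eventually.of_forall fun x => Real.sqrt_nonneg _)
    (Filter.Eventually.of_forall fun x => Real.sqrt_nonneg _)
    (hmem _ hfc.sqrt) (hmem _ hhc.sqrt)
  have e1 : ∀ x, Real.sqrt (f x) ^ (2:ℝ) = f x := fun x => by
    rw [Real.rpow_two, Real.sq_sqrt (hf0 x)]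
  have e2 : ∀ x, Real.sqrt (h x) ^ (2:ℝ) = h x := fun x => by
    rw [Real.rpow_two, Real.sq_sqrt (hh0 x)]
  simp only [e1, e2] at key
  rw [← Real.sqrt_eq_rpow, ← Real.sqrt_eq_rpow] at key
  exact key

lemma lady_final_alg {A B1 B2 D1 D2 I : ℝ} (hA : 0 ≤ A) (hB1 : 0 ≤ B1) (hB2 : 0 ≤ B2)
    (hD1 : 0 ≤ D1) (hD2 : 0 ≤ D2)
    (hI : I ≤ (A + D2) * (A + D1)) (h1 : D1 ≤ 2 * Real.sqrt A * Real.sqrt B1)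
    (h2 : D2 ≤ 2 * Real.sqrt A * Real.sqrt B2) :
    Real.sqrt I ≤ 3 * Real.sqrt A * Real.sqrt (A + (B1 + B2)) := by
  have ha : Real.sqrt A ^ 2 = A := Real.sq_sqrt hA
  have hb : Real.sqrt B1 ^ 2 = B1 := Real.sq_sqrt hB1
  have hc : Real.sqrt B2 ^ 2 = B2 := Real.sq_sqrt hB2
  have ha0 := Real.sqrt_nonneg A
  have hb0 := Real.sqrt_nonneg B1
  have hc0 := Real.sqrt_nonneg B2
  have hI2 : I ≤ 3 * A * (A + (B1 + B2)) := by
    have k1 : (A + D2) * (A + D1)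
        ≤ (A + 2 * Real.sqrt A * Real.sqrt B2) * (A + 2 * Real.sqrt A * Real.sqrt B1) := by
      apply mul_le_mul (by linarith) (by linarith) (by linarith) (by positivity)
    nlinarith [mul_nonneg (mul_nonneg ha0 ha0) (sq_nonneg (Real.sqrt A - Real.sqrt B1)),
      mul_nonneg (mul_nonneg ha0 ha0) (sq_nonneg (Real.sqrt A - Real.sqrt B2)),
      mul_nonneg (mul_nonneg ha0 ha0) (sq_nonneg (Real.sqrt B1 - Real.sqrt B2))]
  calc Real.sqrt I ≤ Real.sqrt (3 * A * (A + (B1 + B2))) := Real.sqrt_le_sqrt hI2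
  _ = Real.sqrt 3 * Real.sqrt A * Real.sqrt (A + (B1 + B2)) := by
      rw [Real.sqrt_mul (by positivity : (0:ℝ) ≤ 3 * A), Real.sqrt_mul (by norm_num : (0:ℝ) ≤ 3)]
  _ ≤ 3 * Real.sqrt A * Real.sqrt (A + (B1 + B2)) := by
      have h3 : Real.sqrt 3 ≤ 3 := by
        nlinarith [Real.sq_sqrt (by norm_num : (0:ℝ) ≤ 3), Real.sqrt_nonneg 3]
      have := Real.sqrt_nonneg (A + (B1 + B2))
      nlinarith [mul_nonneg ha0 this]

end LadyzhenskayaAux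

/-- Ladyzhenskaya's inequality on the 2D torus:
`‖u‖_{L⁴}² ≤ C ‖u‖_{L²} ‖u‖_{W^{1,2}}`. -/
theorem stmt_5 : ∃ C > (0:ℝ), ∀ u : V → V, ContDiff ℝ (⊤ : ℕ∞) u → Per2 u →
    Real.sqrt (∫ x in Tbox, (dot (u x) (u x)) ^ 2)
      ≤ C * Real.sqrt (L2sq u) * Real.sqrt (L2sq u + GradL2sq u) := by
  refine ⟨3, by norm_num, ?_⟩
  intro u hu _
  have hg : ContDiff ℝ (⊤ : ℕ∞) (fun x : V => dot (u x) (u x)) := lady_contDiff_dot hu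
  have h0 : ∀ p : V, 0 ≤ dot (u p) (u p) := fun p => lady_dot_nonneg _
  have hcg : Continuous fun x : V => dot (u x) (u x) := hg.continuous
  have hdu_cont : ∀ e : V, Continuous fun x => fderiv ℝ u x e :=
    fun e => (hu.continuous_fderiv (by simp)).clm_apply continuous_const
  have hq_cont : ∀ e : V, Continuous fun x => dot (fderiv ℝ u x e) (fderiv ℝ u x e) := by
    intro e
    have h := hdu_cont e
    unfold dot
    exact ((continuous_fst.comp h).mul (continuous_fst.comp h)).add
      ((continuous_snd.comp h).mul (continuous_snd.comp h))
  have hq0 : ∀ (e x : V), 0 ≤ dot (fderiv ℝ u x e) (fderiv ℝ u x e) :=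
    fun e x => lady_dot_nonneg _
  have hA0 : 0 ≤ ∫ x in Set.Icc (0:V) 1, dot (u x) (u x) :=
    setIntegral_nonneg measurableSet_Icc fun x _ => h0 x
  have hB0 : ∀ e : V, 0 ≤ ∫ x in Set.Icc (0:V) 1, dot (fderiv ℝ u x e) (fderiv ℝ u x e) :=
    fun e => setIntegral_nonneg measurableSet_Icc fun x _ => hq0 e x
  have hD0 : ∀ e : V, 0 ≤ ∫ x in Set.Icc (0:V) 1, |fderiv ℝ (fun x => dot (u x) (u x)) x e| :=
    fun e => setIntegral_nonneg measurableSet_Icc fun x _ => abs_nonneg _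
  -- the Cauchy–Schwarz bound on the derivative terms
  have hDe : ∀ e : V, (∫ x in Set.Icc (0:V) 1, |fderiv ℝ (fun x => dot (u x) (u x)) x e|)
      ≤ 2 * Real.sqrt (∫ x in Set.Icc (0:V) 1, dot (u x) (u x))
        * Real.sqrt (∫ x in Set.Icc (0:V) 1, dot (fderiv ℝ u x e) (fderiv ℝ u x e)) := by
    intro e
    have step1 : (∫ x in Set.Icc (0:V) 1, |fderiv ℝ (fun x => dot (u x) (u x)) x e|)
        ≤ ∫ x in Set.Icc (0:V) 1, 2 * (Real.sqrt (dot (u x) (u x))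
            * Real.sqrt (dot (fderiv ℝ u x e) (fderiv ℝ u x e))) := by
      apply setIntegral_mono_on
      · exact ((lady_cont_fd hg e).abs).integrableOn_Icc
      · exact (continuous_const.mul ((hcg.sqrt).mul ((hq_cont e).sqrt))).integrableOn_Icc
      · exact measurableSet_Icc
      · intro x _
        rw [lady_fderiv_dot hu x e, abs_mul]
        have := lady_dot_cs (u x) (fderiv ℝ u x e)
        rw [abs_two]
        linarith
    have step2 : (∫ x in Set.Icc (0:V) 1, 2 * (Real.sqrt (dot (u x) (u x))
          * Real.sqrt (dot (fderiv ℝ u x e) (fderiv ℝ u x e))))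
        = 2 * ∫ x in Set.Icc (0:V) 1, Real.sqrt (dot (u x) (u x))
            * Real.sqrt (dot (fderiv ℝ u x e) (fderiv ℝ u x e)) := by
      exact integral_const_mul 2 _
    have step3 := lady_holder_step hcg (hq_cont e) h0 (hq0 e)
    calc (∫ x in Set.Icc (0:V) 1, |fderiv ℝ (fun x => dot (u x) (u x)) x e|)
        ≤ _ := step1
      _ = _ := step2
      _ ≤ 2 * (Real.sqrt (∫ x in Set.Icc (0:V) 1, dot (u x) (u x))
            * Real.sqrt (∫ x in Set.Icc (0:V) 1, dot (fderiv ℝ u x e) (fderiv ℝ u x e))) := by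
          linarith
      _ = _ := by ring
  have key := lady_twod hg h0
  -- unfold the definitions in the goal
  show Real.sqrt (∫ x in Set.Icc (0:V) 1, (dot (u x) (u x)) ^ 2)
      ≤ 3 * Real.sqrt (L2sq u) * Real.sqrt (L2sq u + GradL2sq u)
  have hL2 : L2sq u = ∫ x in Set.Icc (0:V) 1, dot (u x) (u x) := rfl
  have hGrad : GradL2sq u = (∫ x in Set.Icc (0:V) 1, dot (fderiv ℝ u x (1,0)) (fderiv ℝ u x (1,0)))
      + ∫ x in Set.Icc (0:V) 1, dot (fderiv ℝ u x (0,1)) (fderiv ℝ u x (0,1)) := by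
    rw [GradL2sq]
    show (∫ x in Set.Icc (0:V) 1, (dot (fderiv ℝ u x (1,0)) (fderiv ℝ u x (1,0))
        + dot (fderiv ℝ u x (0,1)) (fderiv ℝ u x (0,1)))) = _
    exact integral_add ((hq_cont (1,0)).integrableOn_Icc) ((hq_cont (0,1)).integrableOn_Icc)
  rw [hL2, hGrad]
  exact lady_final_alg hA0 (hB0 (1,0)) (hB0 (0,1)) (hD0 (1,0)) (hD0 (0,1)) key
    (hDe (1,0)) (hDe (0,1))
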